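/- Let G be a group and let f: F → F′ be a ℤG-module homomorphism between finitely generated free ℤG-modules with fixed bases. Then there exists a constant K such that for every finite-index normal subgroup H ≤ G, the induced map f*: Hom_{ℤH}(F′, ℤ) → Hom_{ℤH}(F, ℤ) has operator norm at most K with respect to the ℓ¹-norms induced by the bases and any choice of coset representatives. -/

import Mathlib

/-! Based finitely generated free `ℤG`-modules, modeled as `Fin k × G →₀ ℤ`
(with `ℤ`-basis the elements `g·eᵢ`), together with the `G`-action by left
translation.  `ℤG`-linear maps are `ℤ`-linear `G`-equivariant maps. -/

/-- The free `ℤG`-module of rank `k` with its standard basis. -/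
abbrev FreeMod (G : Type*) (k : ℕ) := Fin k × G →₀ ℤ

/-- The action of `g ∈ G` on the free module, permuting the `ℤ`-basis. -/
noncomputable def gsmul {G : Type*} [Group G] {k : ℕ} (g : G) :
    FreeMod G k →ₗ[ℤ] FreeMod G k :=
  Finsupp.lmapDomain ℤ ℤ (fun p => (p.1, g * p.2))

/-- `ℤG`-linearity of a `ℤ`-linear map between based free `ℤG`-modules. -/
def IsEquivariant {G : Type*} [Group G] {k m : ℕ}
    (f : FreeMod G k →ₗ[ℤ] FreeMod G m) : Prop :=
  ∀ (g : G) (x : FreeMod G k), f (gsmul g x) = gsmul g (f x)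

/-- `ℤH`-linearity of a functional into the trivial module `ℤ`. -/
def IsZHInvariant {G : Type*} [Group G] {k : ℕ} (H : Subgroup G)
    (φ : FreeMod G k →ₗ[ℤ] ℤ) : Prop :=
  ∀ h ∈ H, ∀ x : FreeMod G k, φ (gsmul h x) = φ x

/-- `r` is a choice of coset representatives for `H` in `G`. -/
def IsSection {G : Type*} [Group G] (H : Subgroup G) (r : G ⧸ H → G) : Prop :=
  ∀ c : G ⧸ H, (↑(r c) : G ⧸ H) = c

/-- The `ℓ¹`-norm on `Hom_{ℤH}(FreeMod G k, ℤ)` induced by the `ℤH`-basis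
`{r(c)·eᵢ}` coming from the `ℤG`-basis and the coset representatives `r`. -/
noncomputable def l1Norm {G : Type*} [Group G] {k : ℕ} (H : Subgroup G)
    (r : G ⧸ H → G) (φ : FreeMod G k →ₗ[ℤ] ℤ) : ℝ :=
  ∑ᶠ p : Fin k × (G ⧸ H), ((|φ (Finsupp.single (p.1, r p.2) 1)| : ℤ) : ℝ)

/-!
Write `yᵢ = f(eᵢ) ∈ ℤ[G]^{k'}` for the columns of the matrix of `f`. By equivariance
`f(g eᵢ) = g yᵢ`, so for an `H`-invariant `φ` the triangle inequality gives
`|φ (f (r(c) eᵢ))| ≤ ∑ₚ |yᵢ(p)| · |φ(r'(c p₂) e_{p₁})|`, using normality of `H` to move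
`r(c) p₂` to the chosen representative of its coset. As `c` runs over `G ⧸ H` so does
`c p₂`, so summing over `c` and `i` bounds `‖f^* φ‖₁` by `K ‖φ‖₁` with `K = ∑ᵢ ‖yᵢ‖₁`,
a constant independent of `H`.
-/

theorem LinearMap.apply_eq_sum_support {R M α : Type*} [Semiring R] [AddCommMonoid M]
    [Module R M] (φ : (α →₀ R) →ₗ[R] M) (v : α →₀ R) :
    φ v = ∑ p ∈ v.support, v p • φ (Finsupp.single p 1) := by
  conv_lhs => rw [← v.sum_single]
  rw [map_finsuppSum, Finsupp.sum]
  refine Finset.sum_congr rfl fun p _ => ?_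
  rw [← Finsupp.smul_single_one, map_smul]

section FreeMod

variable {G : Type*} [Group G] {k : ℕ}

theorem gsmul_single (g : G) (p : Fin k × G) (a : ℤ) :
    gsmul g (Finsupp.single p a) = Finsupp.single (p.1, g * p.2) a := by
  simp [gsmul, Finsupp.mapDomain_single]

theorem apply_gsmul_eq_sum_support (φ : FreeMod G k →ₗ[ℤ] ℤ) (g : G) (v : FreeMod G k) :
    φ (gsmul g v) = ∑ p ∈ v.support, v p * φ (Finsupp.single (p.1, g * p.2) 1) := by
  simpa only [LinearMap.comp_apply, gsmul_single, smul_eq_mul] using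
    (φ ∘ₗ gsmul g).apply_eq_sum_support v

theorem IsEquivariant.apply_single {k' : ℕ} {f : FreeMod G k →ₗ[ℤ] FreeMod G k'}
    (hf : IsEquivariant f) (i : Fin k) (g : G) :
    f (Finsupp.single (i, g) 1) = gsmul g (f (Finsupp.single (i, 1) 1)) := by
  rw [← hf, gsmul_single, mul_one]

variable {H : Subgroup G}

/-- Normality is what turns invariance under `H` acting on the left, i.e. along right cosets
`H g`, into invariance along the left cosets `g H` that make up `G ⧸ H`. -/
theorem IsZHInvariant.apply_single_eq_of_mk_eq [H.Normal] {φ : FreeMod G k →ₗ[ℤ] ℤ}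
    (hφ : IsZHInvariant H φ) (j : Fin k) {g g' : G} (h : (g : G ⧸ H) = g') :
    φ (Finsupp.single (j, g) 1) = φ (Finsupp.single (j, g') 1) := by
  have hmem : g' * g⁻¹ ∈ H := by
    simpa [mul_assoc] using Subgroup.Normal.conj_mem ‹_› _ (QuotientGroup.eq.mp h) g
  rw [← hφ _ hmem, gsmul_single, inv_mul_cancel_right]

theorem l1Norm_eq_sum [Fintype (G ⧸ H)] (r : G ⧸ H → G) (φ : FreeMod G k →ₗ[ℤ] ℤ) :
    l1Norm H r φ = ((∑ j : Fin k, ∑ c : G ⧸ H, |φ (Finsupp.single (j, r c) 1)| : ℤ) : ℝ) := by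
  rw [l1Norm, finsum_eq_sum_of_fintype, Fintype.sum_prod_type]
  push_cast
  rfl

theorem IsZHInvariant.abs_apply_gsmul_le [H.Normal] {φ : FreeMod G k →ₗ[ℤ] ℤ}
    (hφ : IsZHInvariant H φ) {r : G ⧸ H → G} (hr : IsSection H r) (g : G) (v : FreeMod G k) :
    |φ (gsmul g v)| ≤
      ∑ p ∈ v.support, |v p| * |φ (Finsupp.single (p.1, r ((g * p.2 : G) : G ⧸ H)) 1)| := by
  rw [apply_gsmul_eq_sum_support]
  refine (Finset.abs_sum_le_sum_abs _ _).trans_eq (Finset.sum_congr rfl fun p _ => ?_)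
  rw [abs_mul, hφ.apply_single_eq_of_mk_eq p.1 (hr _).symm]

theorem IsZHInvariant.sum_abs_apply_gsmul_le [H.Normal] [Fintype (G ⧸ H)]
    {φ : FreeMod G k →ₗ[ℤ] ℤ} (hφ : IsZHInvariant H φ) {r s : G ⧸ H → G}
    (hr : IsSection H r) (hs : IsSection H s) (v : FreeMod G k) :
    ∑ c : G ⧸ H, |φ (gsmul (s c) v)| ≤
      ∑ p ∈ v.support, |v p| * ∑ c : G ⧸ H, |φ (Finsupp.single (p.1, r c) 1)| := by
  calc ∑ c : G ⧸ H, |φ (gsmul (s c) v)|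
      ≤ ∑ c : G ⧸ H, ∑ p ∈ v.support,
          |v p| * |φ (Finsupp.single (p.1, r ((s c * p.2 : G) : G ⧸ H)) 1)| :=
        Finset.sum_le_sum fun c _ => hφ.abs_apply_gsmul_le hr (s c) v
    _ = ∑ p ∈ v.support, |v p| * ∑ c : G ⧸ H, |φ (Finsupp.single (p.1, r c) 1)| := by
        rw [Finset.sum_comm]
        refine Finset.sum_congr rfl fun p _ => ?_
        simp only [QuotientGroup.mk_mul, ← Finset.mul_sum, hs _]
        exact congrArg _ <| Equiv.sum_comp (Equiv.mulRight (p.2 : G ⧸ H))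
          (fun c => |φ (Finsupp.single (p.1, r c) 1)|)

theorem IsZHInvariant.sum_abs_apply_gsmul_le_mul [H.Normal] [Fintype (G ⧸ H)]
    {φ : FreeMod G k →ₗ[ℤ] ℤ} (hφ : IsZHInvariant H φ) {r s : G ⧸ H → G}
    (hr : IsSection H r) (hs : IsSection H s) (v : FreeMod G k) :
    ∑ c : G ⧸ H, |φ (gsmul (s c) v)| ≤
      (∑ p ∈ v.support, |v p|) * ∑ j : Fin k, ∑ c : G ⧸ H, |φ (Finsupp.single (j, r c) 1)| := by
  refine (hφ.sum_abs_apply_gsmul_le hr hs v).trans ?_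
  rw [Finset.sum_mul]
  gcongr with p
  exact Finset.single_le_sum (f := fun j => ∑ c : G ⧸ H, |φ (Finsupp.single (j, r c) 1)|)
    (fun _ _ => Finset.sum_nonneg fun _ _ => abs_nonneg _) (Finset.mem_univ p.1)

end FreeMod

/-- A `ℤG`-linear map `f` between based finitely generated free
`ℤG`-modules induces, for every finite-index normal subgroup `H ≤ G`, a map
`f* : Hom_{ℤH}(F', ℤ) → Hom_{ℤH}(F, ℤ)` whose operator norm with respect to the
induced `ℓ¹`-norms (for any choices of coset representatives) is bounded by a
constant `K` independent of `H`. -/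
theorem uniform_operator_norm_bound
    {G : Type*} [Group G] {k k' : ℕ}
    (f : FreeMod G k →ₗ[ℤ] FreeMod G k') (hf : IsEquivariant f) :
    ∃ K : ℝ, 0 ≤ K ∧
      ∀ (H : Subgroup G), H.Normal → H.FiniteIndex →
      ∀ (r r' : G ⧸ H → G), IsSection H r → IsSection H r' →
      ∀ φ : FreeMod G k' →ₗ[ℤ] ℤ, IsZHInvariant H φ →
        l1Norm H r (φ ∘ₗ f) ≤ K * l1Norm H r' φ := by
  refine ⟨((∑ i : Fin k, ∑ p ∈ (f (Finsupp.single (i, 1) 1)).support,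
    |f (Finsupp.single (i, 1) 1) p| : ℤ) : ℝ), by positivity, ?_⟩
  intro H _ _ r r' hr hr' φ hφ
  have := Fintype.ofFinite (G ⧸ H)
  rw [l1Norm_eq_sum, l1Norm_eq_sum, ← Int.cast_mul, Int.cast_le, Finset.sum_mul]
  gcongr with i
  simpa only [LinearMap.comp_apply, ← hf.apply_single] using
    hφ.sum_abs_apply_gsmul_le_mul hr' hr (f (Finsupp.single (i, 1) 1))
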